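/- Let η > 0, f ≥ 0, and z₀ ∈ ℂ with z₀ ≠ 0. The unique minimizer over z ∈ ℂ of the function φ(z) = (1/2)(|z|² - 2 f log|z|) + (η/2)|z - z₀|² is z* = ρ · (z₀/|z₀|), where ρ = (η|z₀| + √(η²|z₀|² + 4(1+η)f)) / (2(1+η)). -/

import Mathlib

/-! Write `a = ‖z₀‖` and `r = ‖z‖`. Since `‖z - z₀‖ ≥ |r - a|`, with equality exactly when `z` is a
nonnegative multiple of `z₀`, the objective is bounded below by the radial function
`g r = (r² - 2 f log r) / 2 + η (r - a)² / 2`. The radius `ρ` is the positive root of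
`(1 + η) ρ² = η a ρ + f`, i.e. of `g' ρ = 0`, and `log r ≤ log ρ + r / ρ - 1` gives
`g ρ + (1 + η) (r - ρ)² / 2 ≤ g r`. Equality throughout forces `r = ρ` and `z` aligned with `z₀`,
that is `z = z*`. -/

section InnerProductSpace

variable {E : Type*} [NormedAddCommGroup E] [InnerProductSpace ℝ E]

theorem sq_norm_sub_norm_le_sq_norm_sub (x y : E) : (‖x‖ - ‖y‖) ^ 2 ≤ ‖x - y‖ ^ 2 := by
  rw [norm_sub_sq_real]
  nlinarith [real_inner_le_norm x y]

theorem sq_norm_sub_eq_sq_norm_sub_norm_iff (x y : E) :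
    ‖x - y‖ ^ 2 = (‖x‖ - ‖y‖) ^ 2 ↔ ‖y‖ • x = ‖x‖ • y := by
  rw [norm_sub_sq_real, ← inner_eq_norm_mul_iff_real]
  constructor <;> intro h <;> linarith

end InnerProductSpace

theorem quadratic_root_eq {b c d : ℝ} (hc : c ≠ 0) (hdisc : 0 ≤ b ^ 2 + 4 * c * d) :
    c * ((b + √(b ^ 2 + 4 * c * d)) / (2 * c)) ^ 2
      = b * ((b + √(b ^ 2 + 4 * c * d)) / (2 * c)) + d := by
  have hs := Real.sq_sqrt hdisc
  set s := √(b ^ 2 + 4 * c * d)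
  field_simp
  linear_combination hs

noncomputable def poissonRadialObjective (η f a r : ℝ) : ℝ :=
  (1 / 2) * (r ^ 2 - 2 * f * Real.log r) + (η / 2) * (r - a) ^ 2

theorem poissonRadialObjective_add_sq_le {η f a ρ r : ℝ} (hf : 0 ≤ f) (hρ : 0 < ρ)
    (hquad : (1 + η) * ρ ^ 2 = η * a * ρ + f) (hr : 0 < r) :
    poissonRadialObjective η f a ρ + (1 + η) / 2 * (r - ρ) ^ 2
      ≤ poissonRadialObjective η f a r := by
  have hlog : Real.log r - Real.log ρ ≤ r / ρ - 1 := by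
    rw [← Real.log_div hr.ne' hρ.ne']
    exact Real.log_le_sub_one_of_pos (div_pos hr hρ)
  -- `f / ρ = (1 + η) ρ - η a` turns the tangent line of `log` into a polynomial
  have htangent : f * (r / ρ - 1) = ((1 + η) * ρ - η * a) * (r - ρ) := by
    field_simp
    linear_combination (ρ - r) * hquad
  unfold poissonRadialObjective
  nlinarith [mul_le_mul_of_nonneg_left hlog hf]

/-- Poisson proximal subproblem (Lemma 1): unique minimizer over nonzero `z ∈ ℂ` of
`φ(z) = (1/2)(|z|² - 2 f log|z|) + (η/2)|z - z₀|²` is `ρ · z₀/|z₀|`. -/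
theorem poisson_prox_unique_minimizer
    (η f : ℝ) (hη : 0 < η) (hf : 0 ≤ f) (z₀ : ℂ) (hz₀ : z₀ ≠ 0)
    (φ : ℂ → ℝ)
    (hφ : ∀ z : ℂ, φ z =
      (1 / 2) * (‖z‖ ^ 2 - 2 * f * Real.log ‖z‖)
        + (η / 2) * ‖z - z₀‖ ^ 2)
    (ρ : ℝ)
    (hρ : ρ = (η * ‖z₀‖
        + Real.sqrt (η ^ 2 * ‖z₀‖ ^ 2 + 4 * (1 + η) * f)) / (2 * (1 + η)))
    (zstar : ℂ)
    (hzstar : zstar = (ρ : ℂ) * (z₀ / (‖z₀‖ : ℂ))) :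
    zstar ≠ 0 ∧ ∀ z : ℂ, z ≠ 0 → z ≠ zstar → φ zstar < φ z := by
  have ha : 0 < ‖z₀‖ := norm_pos_iff.mpr hz₀
  have hρpos : 0 < ρ := by rw [hρ]; positivity
  have hquad : (1 + η) * ρ ^ 2 = η * ‖z₀‖ * ρ + f := by
    rw [hρ, ← mul_pow]
    exact quadratic_root_eq (by positivity) (by positivity)
  have hnorm : ‖zstar‖ = ρ := by
    rw [hzstar, norm_mul, norm_div, Complex.norm_real, Complex.norm_real, Real.norm_of_nonneg hρpos.le,
      norm_norm, div_self ha.ne', mul_one]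
  have haligned : ‖z₀‖ • zstar = ‖zstar‖ • z₀ := by
    have : (‖z₀‖ : ℂ) ≠ 0 := by exact_mod_cast ha.ne'
    rw [hnorm, Complex.real_smul, Complex.real_smul, hzstar]
    field_simp
  have hφ_eq (z : ℂ) : φ z = poissonRadialObjective η f ‖z₀‖ ‖z‖
      + η / 2 * (‖z - z₀‖ ^ 2 - (‖z‖ - ‖z₀‖) ^ 2) := by
    rw [hφ, poissonRadialObjective]; ring
  have hφstar : φ zstar = poissonRadialObjective η f ‖z₀‖ ρ := by
    rw [hφ_eq, (sq_norm_sub_eq_sq_norm_sub_norm_iff zstar z₀).2 haligned, hnorm]; ring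
  refine ⟨norm_pos_iff.mp (hnorm ▸ hρpos), fun z hz hne => ?_⟩
  have hgap := poissonRadialObjective_add_sq_le hf hρpos hquad (norm_pos_iff.mpr hz)
  have hdev := sq_norm_sub_norm_le_sq_norm_sub z z₀
  by_contra! hle
  rw [hφstar, hφ_eq] at hle
  have hr : ‖z‖ = ρ := by nlinarith
  have hsq : ‖z - z₀‖ ^ 2 = (‖z‖ - ‖z₀‖) ^ 2 := by nlinarith
  refine hne ((smul_right_inj ha.ne').1 ?_)
  rw [(sq_norm_sub_eq_sq_norm_sub_norm_iff z z₀).1 hsq, haligned, hr, hnorm]
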